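/- arXiv:1806.02399 — 2 statements merged into one kernel-verified Lean document; each statement's English description precedes it below -/
import Mathlib

section
/- If G is a bipartite graph of order n, then the matching number of G satisfies ν(G) ≥ n - a(G), where a(G) is the annihilation number of G. -/
open SimpleGraph Finset

def IsMatchingF {V : Type*} (G : SimpleGraph V) (M : Finset (Sym2 V)) : Prop :=
  (∀ e ∈ M, e ∈ G.edgeSet) ∧
  ∀ e ∈ M, ∀ f ∈ M, e ≠ f → ∀ v : V, ¬(v ∈ e ∧ v ∈ f)

noncomputable def matchNum {V : Type*} (G : SimpleGraph V) : ℕ :=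
  sSup {k | ∃ M : Finset (Sym2 V), IsMatchingF G M ∧ M.card = k}

noncomputable def indepNum {V : Type*} [Fintype V] (G : SimpleGraph V) : ℕ :=
  sSup {k | ∃ S : Finset V, (∀ v ∈ S, ∀ w ∈ S, ¬ G.Adj v w) ∧ S.card = k}

noncomputable def annNumG {V : Type*} [Fintype V] [DecidableEq V]
    (G : SimpleGraph V) [DecidableRel G.Adj] : ℕ :=
  sSup {a | ∃ A : Finset V, A.card = a ∧ (∑ v ∈ A, G.degree v) ≤ G.edgeFinset.card}

/-! If every edge of `G` runs between `X` and `Y = Xᶜ`, then for `S ⊆ X` the set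
`S ∪ (Y \ N(S))` is independent, so `|S| ≤ |N(S)| + (α(G) - |Y|)`. The deficiency version of
Hall's theorem then yields a matching of size `|X| - (α(G) - |Y|) = n - α(G)`. Finally
`α(G) ≤ a(G)`: an independent set meets every edge at most once, so its degree sum is at most
`m`. -/

namespace Finset

variable {ι α : Type*} [DecidableEq α] {s : Finset ι} {t : ι → Finset α} {d : ℕ}

theorem card_le_card_biUnion_disjSum_univ (h : ∀ u ⊆ s, #u ≤ #(u.biUnion t) + d)
    (u : Finset s) : #u ≤ #(u.biUnion fun i => (t i).disjSum (univ : Finset (Fin d))) := by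
  rcases u.eq_empty_or_nonempty with rfl | ⟨i, hi⟩
  · simp
  set u' := u.map (Function.Embedding.subtype _)
  have hsub : (u'.biUnion t).disjSum (univ : Finset (Fin d)) ⊆
      u.biUnion fun i => (t i).disjSum univ := by
    rintro (a | b) hx
    · simp only [inl_mem_disjSum, mem_biUnion, u', mem_map] at hx
      obtain ⟨_, ⟨j, hj, rfl⟩, ha⟩ := hx
      exact mem_biUnion.2 ⟨j, hj, inl_mem_disjSum.2 ha⟩
    · exact mem_biUnion.2 ⟨i, hi, inr_mem_disjSum.2 (mem_univ b)⟩
  calc #u = #u' := (card_map _).symm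
    _ ≤ #(u'.biUnion t) + d := h _ fun x hx => by
        obtain ⟨j, -, rfl⟩ := mem_map.1 hx
        exact j.2
    _ = #((u'.biUnion t).disjSum univ) := by simp
    _ ≤ _ := card_le_card hsub

theorem exists_matching_of_card_le_card_biUnion_add (h : ∀ u ⊆ s, #u ≤ #(u.biUnion t) + d) :
    ∃ M : Finset (ι × α), (∀ p ∈ M, p.1 ∈ s ∧ p.2 ∈ t p.1) ∧
      Set.InjOn Prod.fst (M : Set (ι × α)) ∧ Set.InjOn Prod.snd (M : Set (ι × α)) ∧
      #s ≤ #M + d := by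
  classical
  -- Hall's theorem once `d` new targets are made available to every `i ∈ s`
  obtain ⟨g, hg, hgt⟩ := (all_card_le_biUnion_card_iff_exists_injective _).1
    (card_le_card_biUnion_disjSum_univ h)
  have hgt' : ∀ i a, g i = .inl a → a ∈ t i := fun i a hi => inl_mem_disjSum.1 (hi ▸ hgt i)
  set M := {p ∈ s ×ˢ s.biUnion t | ∃ h : p.1 ∈ s, g ⟨p.1, h⟩ = .inl p.2}
  have hM : ∀ {p}, p ∈ M ↔ ∃ h : p.1 ∈ s, g ⟨p.1, h⟩ = .inl p.2 := fun {p} => by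
    refine mem_filter.trans ⟨fun hp => hp.2, fun ⟨hi, hp⟩ => ⟨?_, hi, hp⟩⟩
    exact mem_product.2 ⟨hi, mem_biUnion.2 ⟨p.1, hi, hgt' _ _ hp⟩⟩
  refine ⟨M, fun p hp => ?_, fun p hp q hq hpq => ?_, fun p hp q hq hpq => ?_, ?_⟩
  · obtain ⟨hi, hp⟩ := hM.1 hp
    exact ⟨hi, hgt' _ _ hp⟩
  · obtain ⟨hi, hp⟩ := hM.1 hp
    obtain ⟨hj, hq⟩ := hM.1 hq
    exact Prod.ext hpq <| Sum.inl_injective <|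
      hp.symm.trans ((congrArg g (Subtype.ext hpq)).trans hq)
  · obtain ⟨hi, hp⟩ := hM.1 hp
    obtain ⟨hj, hq⟩ := hM.1 hq
    exact Prod.ext (congrArg Subtype.val (hg (hp.trans (hpq ▸ hq.symm)))) hpq
  have himage : univ.image g ⊆ M.image (.inl ∘ Prod.snd) ∪ univ.image .inr := by
    intro x hx
    obtain ⟨i, -, rfl⟩ := mem_image.1 hx
    rcases hgi : g i with a | b
    · exact mem_union_left _ (mem_image.2 ⟨(i.1, a), hM.2 ⟨i.2, hgi⟩, rfl⟩)
    · exact mem_union_right _ (mem_image_of_mem _ (mem_univ b))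
  calc #s = #(univ.image g) := by rw [card_image_of_injective _ hg, card_univ, Fintype.card_coe]
    _ ≤ #(M.image (.inl ∘ Prod.snd) ∪ univ.image .inr) := card_le_card himage
    _ ≤ #M + #(univ.image (.inr : Fin d → α ⊕ Fin d)) := (card_union_le _ _).trans
        (add_le_add_left card_image_le _)
    _ ≤ #M + d := by grw [card_image_le, card_univ, Fintype.card_fin]

end Finset

namespace SimpleGraph

variable {V : Type*} {G : SimpleGraph V}

theorem IsIndepSet.sum_degree_le_card_edgeFinset [DecidableEq V] [G.LocallyFinite]
    [Fintype G.edgeSet] {A : Finset V} (hA : G.IsIndepSet A) :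
    ∑ v ∈ A, G.degree v ≤ #G.edgeFinset := by
  have hdisj : (A : Set V).PairwiseDisjoint fun v => G.incidenceFinset v := by
    intro u hu v hv huv
    rw [Function.onFun, ← disjoint_coe, coe_incidenceFinset, coe_incidenceFinset,
      Set.disjoint_iff_inter_eq_empty]
    exact G.incidenceSet_inter_incidenceSet_of_not_adj (hA hu hv huv) huv
  calc ∑ v ∈ A, G.degree v = #(A.biUnion fun v => G.incidenceFinset v) := by
        simp only [card_biUnion hdisj, card_incidenceFinset_eq_degree]
    _ ≤ #G.edgeFinset := card_le_card <| biUnion_subset.2 fun v _ => incidenceFinset_subset G v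

theorem indepNum_le_annNumG [Fintype V] [DecidableEq V] [DecidableRel G.Adj] :
    G.indepNum ≤ annNumG G := by
  obtain ⟨A, hA⟩ := G.exists_isNIndepSet_indepNum
  rw [← hA.card_eq]
  refine le_csSup ⟨Fintype.card V, ?_⟩ ⟨A, rfl, hA.isIndepSet.sum_degree_le_card_edgeFinset⟩
  rintro _ ⟨B, rfl, -⟩
  exact card_le_univ B

theorem card_le_matchNum [Fintype V] {M : Finset (Sym2 V)} (hM : IsMatchingF G M) :
    #M ≤ matchNum G := by
  refine le_csSup ⟨Fintype.card (Sym2 V), ?_⟩ ⟨M, hM, rfl⟩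
  rintro _ ⟨N, -, rfl⟩
  exact card_le_univ N

theorem isMatchingF_image_of_injOn [DecidableEq V] {M : Finset (V × V)}
    (hadj : ∀ p ∈ M, G.Adj p.1 p.2)
    (hfst : Set.InjOn Prod.fst (M : Set (V × V))) (hsnd : Set.InjOn Prod.snd (M : Set (V × V)))
    (hsep : ∀ p ∈ M, ∀ q ∈ M, p.1 ≠ q.2) :
    IsMatchingF G (M.image fun p => s(p.1, p.2)) := by
  refine ⟨fun e he => ?_, fun e he f hf hef v hv => ?_⟩
  · obtain ⟨p, hp, rfl⟩ := mem_image.1 he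
    exact hadj p hp
  obtain ⟨p, hp, rfl⟩ := mem_image.1 he
  obtain ⟨q, hq, rfl⟩ := mem_image.1 hf
  have hpq : p ≠ q := by rintro rfl; exact hef rfl
  obtain ⟨hvp, hvq⟩ := hv
  rcases Sym2.mem_iff.1 hvp with rfl | rfl <;> rcases Sym2.mem_iff.1 hvq with h | h
  · exact hpq (hfst hp hq h)
  · exact hsep p hp q hq h
  · exact hsep q hq p hp h.symm
  · exact hpq (hsnd hp hq h)

theorem card_le_matchNum_of_injOn [Fintype V] {M : Finset (V × V)}
    (hadj : ∀ p ∈ M, G.Adj p.1 p.2)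
    (hfst : Set.InjOn Prod.fst (M : Set (V × V))) (hsnd : Set.InjOn Prod.snd (M : Set (V × V)))
    (hsep : ∀ p ∈ M, ∀ q ∈ M, p.1 ≠ q.2) :
    #M ≤ matchNum G := by
  classical
  have hcard : #(M.image fun p => s(p.1, p.2)) = #M := by
    refine card_image_of_injOn fun p hp q hq hpq => ?_
    rcases Sym2.eq_iff.1 hpq with ⟨h₁, h₂⟩ | ⟨h, -⟩
    · exact Prod.ext h₁ h₂
    · exact absurd h (hsep p hp q hq)
  exact hcard ▸ card_le_matchNum (isMatchingF_image_of_injOn hadj hfst hsnd hsep)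

theorem Colorable.exists_isBipartiteWith_compl [Fintype V] [DecidableEq V] (h : G.Colorable 2) :
    ∃ X : Finset V, G.IsBipartiteWith ↑X ↑Xᶜ := by
  obtain ⟨c⟩ := h
  refine ⟨univ.filter (c · = 0), by rw [coe_compl]; exact disjoint_compl_right,
    fun v w hvw => ?_⟩
  have hc := c.valid hvw
  simp only [coe_filter, coe_compl, Set.mem_ofPred_eq, Set.mem_compl_iff, mem_univ, true_and]
  omega

section IsBipartiteWith

variable [DecidableEq V] {X Y S : Finset V}

theorem IsBipartiteWith.isIndepSet_union_sdiff_biUnion_neighborFinset [G.LocallyFinite]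
    (h : G.IsBipartiteWith X Y) (hS : S ⊆ X) :
    G.IsIndepSet ↑(S ∪ (Y \ S.biUnion fun v => G.neighborFinset v)) := by
  intro v hv w hw _ hvw
  simp only [coe_union, coe_sdiff, Set.mem_union, Set.mem_sdiff, mem_coe, mem_biUnion,
    mem_neighborFinset, not_exists, not_and] at hv hw
  rcases hv with hvS | ⟨hvY, hvN⟩ <;> rcases hw with hwS | ⟨hwY, hwN⟩
  · exact Set.disjoint_left.1 h.disjoint (hS hwS) (h.mem_of_mem_adj (hS hvS) hvw)
  · exact hwN v hvS hvw
  · exact hvN w hwS hvw.symm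
  · exact Set.disjoint_left.1 h.disjoint (h.mem_of_mem_adj' hwY hvw) hvY

theorem IsBipartiteWith.card_add_card_le_indepNum_add [Fintype V] [DecidableRel G.Adj]
    (h : G.IsBipartiteWith X Y) (hS : S ⊆ X) :
    #S + #Y ≤ G.indepNum + #(S.biUnion fun v => G.neighborFinset v) := by
  set N := S.biUnion fun v => G.neighborFinset v
  have hdisj : Disjoint S (Y \ N) := (disjoint_coe.1 h.disjoint).mono hS sdiff_subset
  calc #S + #Y ≤ #S + (#(Y \ N) + #N) := by gcongr; exact card_le_card_sdiff_add_card
    _ = #(S ∪ (Y \ N)) + #N := by rw [card_union_of_disjoint hdisj, add_assoc]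
    _ ≤ G.indepNum + #N := by
        gcongr
        exact (h.isIndepSet_union_sdiff_biUnion_neighborFinset hS).card_le_indepNum

theorem IsBipartiteWith.card_sub_indepNum_le_matchNum [Fintype V] [DecidableRel G.Adj]
    (h : G.IsBipartiteWith ↑X ↑Xᶜ) :
    Fintype.card V - G.indepNum ≤ matchNum G := by
  have hY : #Xᶜ ≤ G.indepNum := by simpa using h.card_add_card_le_indepNum_add (empty_subset X)
  obtain ⟨M, hMt, hfst, hsnd, hM⟩ :=
    exists_matching_of_card_le_card_biUnion_add (s := X) (t := fun v => G.neighborFinset v)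
      (d := G.indepNum - #Xᶜ) fun S hS => by
        have hS' := h.card_add_card_le_indepNum_add hS
        omega
  have hadj : ∀ p ∈ M, G.Adj p.1 p.2 := fun p hp => (G.mem_neighborFinset _ _).1 (hMt p hp).2
  have hsep : ∀ p ∈ M, ∀ q ∈ M, p.1 ≠ q.2 := by
    intro p hp q hq hpq
    have hq₂ : q.2 ∈ (↑Xᶜ : Set V) := h.mem_of_mem_adj (mem_coe.2 (hMt q hq).1) (hadj q hq)
    exact (mem_compl.1 (mem_coe.1 hq₂)) (hpq ▸ (hMt p hp).1)
  have hν := card_le_matchNum_of_injOn hadj hfst hsnd hsep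
  have hX := card_compl X
  omega

end IsBipartiteWith

end SimpleGraph

theorem bipartite_matchNum_ge {V : Type*} [Fintype V] [DecidableEq V]
    (G : SimpleGraph V) [DecidableRel G.Adj] (hB : G.Colorable 2) :
    Fintype.card V - annNumG G ≤ matchNum G := by
  obtain ⟨X, hX⟩ := hB.exists_isBipartiteWith_compl
  calc Fintype.card V - annNumG G ≤ Fintype.card V - G.indepNum :=
        Nat.sub_le_sub_left G.indepNum_le_annNumG _
    _ ≤ matchNum G := hX.card_sub_indepNum_le_matchNum
end

section
/- Let s be a tree degree sequence of length n > 2 with l entries equal to 1. If l ≥ ⌈n/2⌉, then there exists a tree T with degree sequence s whose matching number equals n - l, and hence whose nullity equals 2l - n. -/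
open SimpleGraph Finset

noncomputable def degC {n : ℕ} (G : SimpleGraph (Fin n)) (v : Fin n) : ℕ := by
  classical exact G.degree v

/-- `G` has degree sequence `d 0, d 1, …, d (n-1)`. -/
def HasDegSeq {n : ℕ} (d : ℕ → ℕ) (G : SimpleGraph (Fin n)) : Prop :=
  ∃ σ : Equiv.Perm (Fin n), ∀ i : Fin n, degC G (σ i) = d i

/-- Nullity of the adjacency matrix over ℚ. -/
noncomputable def nullityC {n : ℕ} (G : SimpleGraph (Fin n)) : ℕ := by
  classical exact n - (G.adjMatrix ℚ).rank

/-- Annihilation number of the sequence `d` with respect to `n - 1` edges. -/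
noncomputable def annNumS (n : ℕ) (d : ℕ → ℕ) : ℕ :=
  sSup {a | a ≤ n ∧ (∑ i ∈ Finset.range a, d i) ≤ n - 1}

/-! Put the leaves first: the sorted sequence has `d i = 1` exactly for `i < l`, and the
`n - l ≤ l` internal vertices `l, …, n - 1` can each be given a private pendant leaf, `v - l`.
The remaining edges come from a greedy parent assignment: the non-root vertices, in increasing
order, fill the free child slots of the internal vertices, also in increasing order; sortedness of
the degrees guarantees that every parent lies above its child, so the graph is a tree.

In such a tree the internal vertices `S` form a vertex cover, every vertex outside `S` is a leaf,
and each vertex of `S` has a pendant neighbour. A matching meets `S` injectively, and the pendant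
edges form a matching, so `ν = |S|`. The adjacency matrix has rank `2|S|`: it factors through
`S ⊕ S` (the columns outside `S` are unit vectors at `S`), and its principal block on `S` and the
pendant leaves is `[[B, 1], [1, 0]]`, which is invertible. -/

section PendantCover

variable {V : Type*} (G : SimpleGraph V)

structure IsPendantCover (S : Finset V) : Prop where
  cover : ∀ ⦃u v⦄, G.Adj u v → u ∈ S ∨ v ∈ S
  eq_of_adj_of_adj : ∀ w ∉ S, ∀ ⦃u v⦄, G.Adj w u → G.Adj w v → u = v
  exists_pendant : ∀ v ∈ S, ∃ w ∉ S, G.Adj v w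

variable {G}

theorem IsMatchingF.card_le_of_cover {M : Finset (Sym2 V)} {S : Finset V}
    (hM : IsMatchingF G M) (hS : ∀ ⦃u v⦄, G.Adj u v → u ∈ S ∨ v ∈ S) : #M ≤ #S := by
  refine Finset.card_le_card_of_forall_subsingleton (fun e v => v ∈ e) (fun e he => ?_)
    fun v _ e he e' he' => by_contra fun hne => hM.2 e he.1 e' he'.1 hne v ⟨he.2, he'.2⟩
  induction e using Sym2.ind with
  | _ u v =>
    rcases hS (hM.1 _ he) with hu | hv
    · exact ⟨u, hu, Sym2.mem_mk_left u v⟩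
    · exact ⟨v, hv, Sym2.mem_mk_right u v⟩

theorem rank_adjMatrix_le_of_cover [Fintype V] [DecidableEq V] [DecidableRel G.Adj]
    {K : Type*} [Field K] {S : Finset V} (hS : ∀ ⦃u v⦄, G.Adj u v → u ∈ S ∨ v ∈ S) :
    (G.adjMatrix K).rank ≤ 2 * #S := by
  set A := G.adjMatrix K
  let X : Matrix V (S ⊕ S) K :=
    Matrix.of fun i => Sum.elim (fun s => A i s) (fun s => if i = s then 1 else 0)
  let Y : Matrix (S ⊕ S) V K := Matrix.of (Sum.elim (fun s j => if (s : V) = j then 1 else 0)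
    fun s j => if j ∈ S then 0 else A s j)
  have hXY : A = X * Y := by
    ext i j
    simp only [X, Y, Matrix.mul_apply, Fintype.sum_sum_type, Matrix.of_apply, Sum.elim_inl,
      Sum.elim_inr]
    rw [Finset.sum_coe_sort S (fun s => A i s * if s = j then 1 else 0),
      Finset.sum_coe_sort S (fun s => (if i = s then 1 else 0) * if j ∈ S then 0 else A s j)]
    simp only [mul_ite, mul_one, mul_zero, ite_mul, one_mul, zero_mul, Finset.sum_ite_eq']
    by_cases hj : j ∈ S
    · simp [hj]
    simp only [hj, if_false, Finset.sum_ite_eq, zero_add]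
    split_ifs with hi
    · rfl
    · simpa [A] using fun h => (hS h).elim hi hj
  calc A.rank = (X * Y).rank := by rw [← hXY]
    _ ≤ X.rank := Matrix.rank_mul_le_left X Y
    _ ≤ Fintype.card (S ⊕ S) := Matrix.rank_le_card_width X
    _ = 2 * #S := by simp [two_mul]

namespace IsPendantCover

variable {S : Finset V} (hS : IsPendantCover G S)
include hS

theorem exists_pendant_fun : ∃ π : S → V, ∀ s, π s ∉ S ∧ G.Adj s (π s) := by
  choose π hπ using fun s : S => hS.exists_pendant s s.2
  exact ⟨π, hπ⟩

theorem adj_pendant_iff {π : S → V} (hπ : ∀ s, π s ∉ S ∧ G.Adj s (π s)) (u : V) (s : S) :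
    G.Adj u (π s) ↔ u = s :=
  ⟨fun h => hS.eq_of_adj_of_adj _ (hπ s).1 h.symm (hπ s).2.symm, fun h => h ▸ (hπ s).2⟩

theorem exists_isMatchingF_card_eq : ∃ M : Finset (Sym2 V), IsMatchingF G M ∧ #M = #S := by
  classical
  obtain ⟨π, hπ⟩ := hS.exists_pendant_fun
  have hne : ∀ s t : S, (s : V) ≠ π t := fun s t h => (hπ t).1 (h ▸ s.2)
  refine ⟨univ.image fun s : S => s(↑s, π s), ⟨?_, ?_⟩, ?_⟩
  · simp only [mem_image, mem_univ, true_and, forall_exists_index, forall_apply_eq_imp_iff]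
    exact fun s => (hπ s).2
  · simp only [mem_image, mem_univ, true_and, forall_exists_index, forall_apply_eq_imp_iff,
      Sym2.mem_iff]
    rintro s t hst v ⟨rfl | rfl, h | h⟩
    · exact hst (by rw [Subtype.ext h])
    · exact hne s t h
    · exact hne t s h.symm
    · exact hst (by rw [Subtype.ext ((hS.adj_pendant_iff hπ s t).1 (h ▸ (hπ s).2))])
  · rw [card_image_of_injective, card_univ, Fintype.card_coe]
    intro s t hst
    rcases Sym2.eq_iff.1 hst with ⟨h, -⟩ | ⟨h, -⟩
    · exact Subtype.ext h
    · exact absurd h (hne s t)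

theorem matchNum_eq : matchNum G = #S := by
  refine IsGreatest.csSup_eq ⟨hS.exists_isMatchingF_card_eq, ?_⟩
  rintro k ⟨M, hM, rfl⟩
  exact hM.card_le_of_cover hS.cover

theorem rank_adjMatrix [Fintype V] [DecidableEq V] [DecidableRel G.Adj] {K : Type*} [Field K] :
    (G.adjMatrix K).rank = 2 * #S := by
  refine le_antisymm (rank_adjMatrix_le_of_cover hS.cover) ?_
  obtain ⟨π, hπ⟩ := hS.exists_pendant_fun
  set B : Matrix S S K := (G.adjMatrix K).submatrix (↑) (↑)
  have hblocks : (G.adjMatrix K).submatrix (Sum.elim (↑) π) (Sum.elim (↑) π) =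
      Matrix.fromBlocks B 1 1 (0 : Matrix S S K) := by
    ext (a | a) (b | b)
    · rfl
    · rw [Matrix.submatrix_apply, Matrix.fromBlocks_apply₁₂, Sum.elim_inl, Sum.elim_inr,
        adjMatrix_apply, Matrix.one_apply]
      simp only [hS.adj_pendant_iff hπ, ← Subtype.ext_iff]
    · rw [Matrix.submatrix_apply, Matrix.fromBlocks_apply₂₁, Sum.elim_inl, Sum.elim_inr,
        adjMatrix_apply, Matrix.one_apply]
      simp only [G.adj_comm (π a), hS.adj_pendant_iff hπ, ← Subtype.ext_iff, eq_comm]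
    · simpa using fun h => (hS.cover h).elim (hπ a).1 (hπ b).1
  have hunit : IsUnit (Matrix.fromBlocks B 1 1 (0 : Matrix S S K)) := by
    refine IsUnit.of_mul_eq_one (Matrix.fromBlocks 0 (1 : Matrix S S K) 1 (-B)) ?_
    simp [Matrix.fromBlocks_multiply, Matrix.fromBlocks_one]
  calc 2 * #S = Fintype.card (S ⊕ S) := by simp [two_mul]
    _ = (Matrix.fromBlocks B 1 1 (0 : Matrix S S K)).rank :=
      (Matrix.rank_of_isUnit _ hunit).symm
    _ ≤ (G.adjMatrix K).rank := hblocks ▸ Matrix.rank_submatrix_le _ _ _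

end IsPendantCover
end PendantCover

theorem SimpleGraph.isTree_of_connected_of_sum_degrees {V : Type*} [Fintype V]
    {G : SimpleGraph V} [DecidableRel G.Adj] (hG : G.Connected)
    (h : ∑ v, G.degree v + 2 = 2 * Fintype.card V) :
    G.IsTree := by
  classical
  rw [sum_degrees_eq_twice_card_edges] at h
  rw [isTree_iff_connected_and_card, Nat.card_eq_fintype_card, Nat.card_eq_fintype_card,
    ← edgeFinset_card]
  exact ⟨hG, by omega⟩

section ParentGraph

variable {n : ℕ} {p : ℕ → ℕ}

def parentGraph (n : ℕ) (p : ℕ → ℕ) : SimpleGraph (Fin n) :=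
  SimpleGraph.fromRel fun u v => p u = v

theorem parentGraph_adj (hp : ∀ j, j < p j) {u v : Fin n} :
    (parentGraph n p).Adj u v ↔ p u = v ∨ p v = u := by
  rw [parentGraph, fromRel_adj]
  refine ⟨And.right, fun h => ⟨fun huv => ?_, h⟩⟩
  subst huv
  exact h.elim (hp u).ne' (hp u).ne'

theorem parentGraph_reachable (hp : ∀ j, j < p j) (hpn : ∀ j, j + 1 < n → p j < n)
    (v : Fin n) {w : Fin n} (hw : (w : ℕ) + 1 = n) : (parentGraph n p).Reachable v w := by
  induction h : n - v using Nat.strong_induction_on generalizing v with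
  | _ k ih =>
    by_cases hvw : v = w
    · exact hvw ▸ Reachable.refl _
    have hv : (v : ℕ) + 1 < n := by have := Fin.val_ne_of_ne hvw; omega
    have hadj : (parentGraph n p).Adj v ⟨p v, hpn v hv⟩ := (parentGraph_adj hp).2 (Or.inl rfl)
    exact hadj.reachable.trans (ih _ (by have := hp v; dsimp only; omega) _ rfl)

theorem parentGraph_connected (hp : ∀ j, j < p j) (hpn : ∀ j, j + 1 < n → p j < n)
    (hn : 0 < n) : (parentGraph n p).Connected := by
  have : Nonempty (Fin n) := ⟨⟨0, hn⟩⟩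
  exact (connected_iff_exists_forall_reachable _).2
    ⟨⟨n - 1, by omega⟩, fun v => (parentGraph_reachable hp hpn v (by simp; omega)).symm⟩

theorem parentGraph_degree (hp : ∀ j, j < p j) [DecidableRel (parentGraph n p).Adj]
    (v : Fin n) :
    (parentGraph n p).degree v = (if p v < n then 1 else 0) + #{j ∈ range n | p j = v} := by
  have hsplit : ∀ j, (if p v = j ∨ p j = v then 1 else 0) =
      (if p v = j then 1 else 0) + if p j = v then 1 else 0 := by
    intro j
    have := hp v
    have := hp j
    split_ifs <;> omega
  rw [← card_neighborFinset_eq_degree, neighborFinset_eq_filter, card_filter]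
  simp only [parentGraph_adj hp]
  rw [Fin.sum_univ_eq_sum_range (fun j => if p v = j ∨ p j = v then 1 else 0),
    Finset.sum_congr rfl fun j _ => hsplit j, sum_add_distrib, sum_ite_eq, card_filter]
  simp

end ParentGraph

section Slot

variable {c : ℕ → ℕ} {N x q : ℕ}

/-- If each `k` owns `c k` consecutive slots, numbered from `0` in increasing order of owner,
then `slot c x` is the owner of slot `x`. -/
noncomputable def slot (c : ℕ → ℕ) (x : ℕ) : ℕ := sInf {q | x < ∑ k ∈ range (q + 1), c k}

theorem slot_le_iff (hx : x < ∑ k ∈ range N, c k) :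
    slot c x ≤ q ↔ x < ∑ k ∈ range (q + 1), c k := by
  have hne : {q | x < ∑ k ∈ range (q + 1), c k}.Nonempty := by
    rcases N with _ | N
    · simp at hx
    · exact ⟨N, hx⟩
  exact ⟨fun h => (Nat.sInf_mem hne).trans_le
    (sum_le_sum_of_subset (range_subset_range.2 (Nat.succ_le_succ h))), fun h => Nat.sInf_le h⟩

theorem le_slot_iff (hx : x < ∑ k ∈ range N, c k) :
    q ≤ slot c x ↔ ∑ k ∈ range q, c k ≤ x := by
  cases q with
  | zero => simp
  | succ q => rw [Nat.succ_le_iff, ← not_le, slot_le_iff hx, not_lt]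

theorem card_filter_slot_eq (hq : q < N) :
    #{x ∈ range (∑ k ∈ range N, c k) | slot c x = q} = c q := by
  have hmono : ∑ k ∈ range (q + 1), c k ≤ ∑ k ∈ range N, c k :=
    sum_le_sum_of_subset (range_subset_range.2 hq)
  have hfilter : {x ∈ range (∑ k ∈ range N, c k) | slot c x = q} =
      Ico (∑ k ∈ range q, c k) (∑ k ∈ range (q + 1), c k) := by
    ext x
    simp only [mem_filter, mem_range, mem_Ico]
    constructor
    · rintro ⟨hx, rfl⟩
      exact ⟨(le_slot_iff hx).1 le_rfl, (slot_le_iff hx).1 le_rfl⟩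
    · rintro ⟨h1, h2⟩
      have hx := h2.trans_le hmono
      exact ⟨hx, le_antisymm ((slot_le_iff hx).2 h2) ((le_slot_iff hx).2 h1)⟩
  rw [hfilter, Nat.card_Ico, sum_range_succ]
  omega

end Slot

theorem lt_card_filter_le_iff {n : ℕ} {d : ℕ → ℕ} (hsort : ∀ i j, i ≤ j → j < n → d i ≤ d j)
    {i : ℕ} (hi : i < n) (a : ℕ) : i < #{j ∈ range n | d j ≤ a} ↔ d i ≤ a := by
  constructor
  · intro hlt
    by_contra! hda
    have hsub : {j ∈ range n | d j ≤ a} ⊆ range i := fun j hj => by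
      simp only [mem_filter, mem_range] at hj ⊢
      by_contra! hij
      exact absurd (hsort i j hij hj.1) (by omega)
    simpa using hlt.trans_le (card_le_card hsub)
  · intro hda
    have hsub : range (i + 1) ⊆ {j ∈ range n | d j ≤ a} := fun j hj => by
      simp only [mem_filter, mem_range] at hj ⊢
      exact ⟨by omega, (hsort j i (by omega) hi).trans hda⟩
    simpa using card_le_card hsub

structure IsSortedTreeDegSeq (n l : ℕ) (d : ℕ → ℕ) : Prop where
  mono : ∀ i j, i ≤ j → j < n → d i ≤ d j
  pos : ∀ i < n, 1 ≤ d i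
  sum_eq : ∑ i ∈ range n, d i = 2 * n - 2
  eq_one_iff : ∀ i < n, d i = 1 ↔ i < l

/-- The number of children of `k` other than its pendant leaf, with `n - 1` the root; truncated
subtraction makes it `0` for a leaf. -/
def spareDeg (n : ℕ) (d : ℕ → ℕ) (k : ℕ) : ℕ := if k + 1 < n then d k - 2 else d k - 1

/-- Leaf `j < n - l` is the pendant leaf of `j + l`; the other vertices below the root `n - 1`
fill the `spareDeg` slots, and the root gets the parent `n`, outside the graph. -/
noncomputable def treeParent (n l : ℕ) (d : ℕ → ℕ) (j : ℕ) : ℕ :=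
  if j < n - l then j + l else if j + 1 < n then slot (spareDeg n d) (j - (n - l)) else j + 1

theorem treeParent_sub {n l v : ℕ} {d : ℕ → ℕ} (hlv : l ≤ v) (hvn : v < n) :
    treeParent n l d (v - l) = v := by
  rw [treeParent, if_pos (by omega), Nat.sub_add_cancel hlv]

namespace IsSortedTreeDegSeq

variable {n l : ℕ} {d : ℕ → ℕ}

theorem of_card_filter_eq_one (hsort : ∀ i j, i ≤ j → j < n → d i ≤ d j)
    (hpos : ∀ i < n, 1 ≤ d i) (hsum : ∑ i ∈ range n, d i = 2 * n - 2) :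
    IsSortedTreeDegSeq n #{i ∈ range n | d i = 1} d := by
  refine ⟨hsort, hpos, hsum, fun i hi => ?_⟩
  have hone : ∀ j ∈ range n, d j = 1 ↔ d j ≤ 1 := fun j hj => by
    have := hpos j (mem_range.1 hj)
    omega
  rw [filter_congr hone, lt_card_filter_le_iff hsort hi]
  have := hpos i hi
  omega

theorem lt_of_two_lt (hd : IsSortedTreeDegSeq n l d) (hn : 2 < n) : l < n := by
  by_contra! hln
  have hone : ∀ i ∈ range n, d i = 1 := fun i hi =>
    (hd.eq_one_iff i (mem_range.1 hi)).2 ((mem_range.1 hi).trans_le hln)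
  have := hd.sum_eq
  rw [sum_congr rfl hone, sum_const, card_range, smul_eq_mul, mul_one] at this
  omega

theorem spareDeg_add (hd : IsSortedTreeDegSeq n l d) (hln : l < n) {k : ℕ} (hk : k < n) :
    spareDeg n d k + (if k + 1 < n then 1 else 0) + (if l ≤ k then 1 else 0) = d k := by
  have := hd.pos k hk
  have := hd.eq_one_iff k hk
  unfold spareDeg
  split_ifs <;> omega

theorem sum_spareDeg_add_one (hd : IsSortedTreeDegSeq n l d) (hln : l < n) :
    ∑ k ∈ range n, spareDeg n d k + 1 = l := by
  have hsum := hd.sum_eq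
  rw [← sum_congr rfl fun k hk => hd.spareDeg_add hln (mem_range.1 hk), sum_add_distrib,
    sum_add_distrib, ← card_filter, ← card_filter] at hsum
  have hnonroot : #{k ∈ range n | k + 1 < n} = n - 1 := by
    rw [show {k ∈ range n | k + 1 < n} = range (n - 1) by ext; simp; omega, card_range]
  have hinternal : #{k ∈ range n | l ≤ k} = n - l := by
    rw [show {k ∈ range n | l ≤ k} = Ico l n by ext; simp; omega, Nat.card_Ico]
  omega

theorem sum_range_spareDeg_le (hd : IsSortedTreeDegSeq n l d) (hln : l < n) {j : ℕ}
    (hj : n - l ≤ j) (hjn : j + 1 < n) :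
    ∑ k ∈ range (j + 1), spareDeg n d k ≤ j - (n - l) := by
  by_cases hsmall : d (j + 1) ≤ 2
  · rw [sum_eq_zero fun k hk => ?_]
    · exact Nat.zero_le _
    have := hd.mono k (j + 1) (by simp at hk; omega) hjn
    simp only [mem_range] at hk
    rw [spareDeg, if_pos (by omega)]
    omega
  · have htail : n - (j + 1) ≤ ∑ k ∈ Ico (j + 1) n, spareDeg n d k := by
      simpa using card_nsmul_le_sum (Ico (j + 1) n) (spareDeg n d) 1 fun k hk => by
        have := hd.mono (j + 1) k (mem_Ico.1 hk).1 (mem_Ico.1 hk).2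
        unfold spareDeg
        split_ifs <;> omega
    have := sum_range_add_sum_Ico (spareDeg n d) (show j + 1 ≤ n by omega)
    have := hd.sum_spareDeg_add_one hln
    omega

theorem lt_treeParent (hd : IsSortedTreeDegSeq n l d) (hln : l < n) (j : ℕ) :
    j < treeParent n l d j := by
  have hl := hd.sum_spareDeg_add_one hln
  unfold treeParent
  split_ifs with h1 h2
  · omega
  · rw [← Nat.succ_le_iff, le_slot_iff (N := n) (by omega)]
    exact hd.sum_range_spareDeg_le hln (by omega) h2
  · omega

theorem treeParent_lt (hd : IsSortedTreeDegSeq n l d) (hln : l < n) {j : ℕ} (hj : j + 1 < n) :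
    treeParent n l d j < n := by
  have hl := hd.sum_spareDeg_add_one hln
  unfold treeParent
  split_ifs with h1
  · omega
  · rw [← Nat.le_sub_one_iff_lt (by omega), slot_le_iff (N := n) (by omega),
      Nat.sub_add_cancel (by omega)]
    omega

theorem le_treeParent (hd : IsSortedTreeDegSeq n l d) (hln : l < n) (j : ℕ) :
    l ≤ treeParent n l d j := by
  have hl := hd.sum_spareDeg_add_one hln
  have hleaves : ∑ k ∈ range l, spareDeg n d k = 0 := sum_eq_zero fun k hk => by
    have hk := mem_range.1 hk
    have := (hd.eq_one_iff k (by omega)).2 hk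
    rw [spareDeg, if_pos (by omega)]
    omega
  unfold treeParent
  split_ifs with h1 h2
  · omega
  · rw [le_slot_iff (N := n) (by omega), hleaves]
    exact Nat.zero_le _
  · omega

theorem card_filter_treeParent_eq (hd : IsSortedTreeDegSeq n l d) (hln : l < n) {v : ℕ}
    (hv : v < n) : #{j ∈ range n | treeParent n l d j = v} =
      (if l ≤ v then 1 else 0) + spareDeg n d v := by
  have hl := hd.sum_spareDeg_add_one hln
  have hpendant : ∑ j ∈ range (n - l), (if j + l = v then 1 else 0) = if l ≤ v then 1 else 0 := by
    split_ifs with hlv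
    · simp_rw [show ∀ j, (j + l = v) ↔ (v - l = j) by omega]
      rw [sum_ite_eq, if_pos (mem_range.2 (by omega))]
    · exact sum_eq_zero fun j _ => if_neg (by omega)
  have hspare : ∑ x ∈ range (l - 1), (if slot (spareDeg n d) x = v then 1 else 0) =
      spareDeg n d v := by
    rw [← card_filter, show l - 1 = ∑ k ∈ range n, spareDeg n d k by omega,
      card_filter_slot_eq hv]
  calc #{j ∈ range n | treeParent n l d j = v}
      = ∑ j ∈ range ((n - l) + (l - 1) + 1), if treeParent n l d j = v then 1 else 0 := by
        rw [card_filter, show n - l + (l - 1) + 1 = n by omega]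
    _ = ∑ j ∈ range (n - l), (if j + l = v then 1 else 0) +
        ∑ x ∈ range (l - 1), (if slot (spareDeg n d) x = v then 1 else 0) := by
        have hroot : treeParent n l d (n - l + (l - 1)) = n - l + (l - 1) + 1 := by
          rw [treeParent, if_neg (by omega), if_neg (by omega)]
        rw [sum_range_succ, sum_range_add, hroot, if_neg (by omega), add_zero]
        congr 1
        · refine sum_congr rfl fun j hj => ?_
          rw [treeParent, if_pos (mem_range.1 hj)]
        · refine sum_congr rfl fun x hx => ?_
          have hx := mem_range.1 hx
          have hslot : treeParent n l d (n - l + x) = slot (spareDeg n d) x := by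
            rw [treeParent, if_neg (by omega), if_pos (by omega), Nat.add_sub_cancel_left]
          rw [hslot]
    _ = _ := by rw [hpendant, hspare]

theorem degree_parentGraph (hd : IsSortedTreeDegSeq n l d) (hln : l < n)
    [DecidableRel (parentGraph n (treeParent n l d)).Adj] (v : Fin n) :
    (parentGraph n (treeParent n l d)).degree v = d v := by
  have hroot : treeParent n l d v < n ↔ (v : ℕ) + 1 < n :=
    ⟨fun h => by have := hd.lt_treeParent hln v; omega, hd.treeParent_lt hln⟩
  rw [parentGraph_degree (hd.lt_treeParent hln), hd.card_filter_treeParent_eq hln v.2,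
    ← hd.spareDeg_add hln v.2, if_congr hroot rfl rfl]
  ring

theorem isPendantCover (hd : IsSortedTreeDegSeq n l d) (hln : l < n) (hle : n ≤ 2 * l) :
    IsPendantCover (parentGraph n (treeParent n l d)) (Ici ⟨l, hln⟩) := by
  have hp := hd.lt_treeParent hln
  have hpl := hd.le_treeParent hln
  have hmem : ∀ v : Fin n, v ∈ Ici ⟨l, hln⟩ ↔ l ≤ v := fun v => by rw [mem_Ici, Fin.le_def]
  refine ⟨fun u v huv => ?_, fun w hw u v hu hv => ?_, fun v hv => ?_⟩
  · rcases (parentGraph_adj hp).1 huv with h | h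
    · exact Or.inr ((hmem v).2 (h ▸ hpl u))
    · exact Or.inl ((hmem u).2 (h ▸ hpl v))
  · rw [hmem] at hw
    have hparent : ∀ x : Fin n, (parentGraph n (treeParent n l d)).Adj w x →
        treeParent n l d w = x := fun x hx =>
      ((parentGraph_adj hp).1 hx).resolve_right fun h => hw (h ▸ hpl x)
    exact Fin.ext ((hparent u hu).symm.trans (hparent v hv))
  · rw [hmem] at hv
    refine ⟨⟨v - l, by omega⟩, by rw [hmem]; show ¬l ≤ v - l; omega, (parentGraph_adj hp).2 ?_⟩
    exact Or.inr (treeParent_sub hv v.2)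

end IsSortedTreeDegSeq

theorem exists_tree_matching_eq_internal (n : ℕ) (d : ℕ → ℕ) (hn : 2 < n)
    (hsort : ∀ i j, i ≤ j → j < n → d i ≤ d j)
    (hpos : ∀ i < n, 1 ≤ d i)
    (hsum : ∑ i ∈ Finset.range n, d i = 2 * n - 2)
    (l : ℕ) (hl : l = ((Finset.range n).filter fun i => d i = 1).card)
    (hge : (n + 1) / 2 ≤ l) :
    ∃ G : SimpleGraph (Fin n), G.IsTree ∧ HasDegSeq d G ∧
      matchNum G = n - l ∧ nullityC G = 2 * l - n := by
  classical
  have hd : IsSortedTreeDegSeq n l d := hl ▸ .of_card_filter_eq_one hsort hpos hsum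
  have hln := hd.lt_of_two_lt hn
  have hdeg := hd.degree_parentGraph hln
  have hS := hd.isPendantCover hln (by omega)
  refine ⟨parentGraph n (treeParent n l d), ?_, ⟨Equiv.refl _, fun i => ?_⟩, ?_, ?_⟩
  · refine isTree_of_connected_of_sum_degrees
      (parentGraph_connected (hd.lt_treeParent hln) (fun j => hd.treeParent_lt hln) (by omega)) ?_
    rw [Fintype.card_fin, sum_congr rfl fun v _ => hdeg v, Fin.sum_univ_eq_sum_range d n, hsum]
    omega
  · rw [Equiv.refl_apply, degC, hdeg]
  · rw [hS.matchNum_eq, Fin.card_Ici]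
  · rw [nullityC, hS.rank_adjMatrix, Fin.card_Ici, Fin.val_mk]
    omega
end
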